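/- Let f(a) = sqrt(1+a) for a ≥ 0. Then for every a ≥ 1 and every 0 < ε ≤ 1, the second-order central difference satisfies f(a+ε) + f(a-ε) - 2f(a) ≤ ε² f''(a) = -ε²/(4(1+a)^{3/2}). -/

import Mathlib

/-!
The cubic Taylor polynomial of `√` at `b > 0` dominates `√` on `[0, ∞)`: writing `x = √(b + t)`
and `s = √b`, the gap is `(x - s)⁴ ((x + 2s)² + s²) / (16 s⁵) ≥ 0`. Adding this bound at `t = ε`
and `t = -ε`, the odd-order terms cancel and what is left is `2√b + ε² f''(b)`.
-/

open Real

lemma self_le_sqrt_taylor_three_sq (x s : ℝ) (hs : 0 < s) :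
    x ≤ s + (x ^ 2 - s ^ 2) / (2 * s) - (x ^ 2 - s ^ 2) ^ 2 / (8 * s ^ 3)
      + (x ^ 2 - s ^ 2) ^ 3 / (16 * s ^ 5) := by
  have hgap : s + (x ^ 2 - s ^ 2) / (2 * s) - (x ^ 2 - s ^ 2) ^ 2 / (8 * s ^ 3)
      + (x ^ 2 - s ^ 2) ^ 3 / (16 * s ^ 5) - x
      = (x - s) ^ 4 * ((x + 2 * s) ^ 2 + s ^ 2) / (16 * s ^ 5) := by
    field_simp
    ring
  have : 0 ≤ (x - s) ^ 4 * ((x + 2 * s) ^ 2 + s ^ 2) / (16 * s ^ 5) := by positivity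
  linarith

lemma sqrt_add_le_taylor_three {b t : ℝ} (hb : 0 < b) (ht : -b ≤ t) :
    √(b + t) ≤ √b + t / (2 * √b) - t ^ 2 / (8 * √b ^ 3) + t ^ 3 / (16 * √b ^ 5) := by
  have ht' : t = √(b + t) ^ 2 - √b ^ 2 := by
    rw [sq_sqrt (by linarith), sq_sqrt hb.le]
    ring
  have h := self_le_sqrt_taylor_three_sq (√(b + t)) (√b) (sqrt_pos.2 hb)
  rwa [← ht'] at h

theorem sqrt_add_add_sqrt_sub_le {b ε : ℝ} (hb : 0 < b) (hε : |ε| ≤ b) :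
    √(b + ε) + √(b - ε) ≤ 2 * √b - ε ^ 2 / (4 * √b ^ 3) := by
  obtain ⟨hε_lower, hε_upper⟩ := abs_le.1 hε
  have hplus := sqrt_add_le_taylor_three hb hε_lower
  have hminus := sqrt_add_le_taylor_three (t := -ε) hb (by linarith)
  have hsum : (ε / (2 * √b) - ε ^ 2 / (8 * √b ^ 3) + ε ^ 3 / (16 * √b ^ 5))
      + (-ε / (2 * √b) - (-ε) ^ 2 / (8 * √b ^ 3) + (-ε) ^ 3 / (16 * √b ^ 5))
      = -(ε ^ 2 / (4 * √b ^ 3)) := by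
    field_simp
    ring
  rw [← sub_eq_add_neg] at hminus
  linarith

/-- For `f a = √(1+a)`, for every `a ≥ 1` and `0 < ε ≤ 1`, the second-order
central difference satisfies
`f(a+ε) + f(a-ε) - 2 f(a) ≤ ε² f''(a) = -ε²/(4 (1+a)^{3/2})`. -/
theorem stmt_0 (a ε : ℝ) (ha : 1 ≤ a) (hε : 0 < ε) (hε1 : ε ≤ 1) :
    Real.sqrt (1 + (a + ε)) + Real.sqrt (1 + (a - ε)) - 2 * Real.sqrt (1 + a) ≤
      -ε ^ 2 / (4 * (1 + a) ^ ((3 : ℝ) / 2)) := by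
  have hb : 0 < 1 + a := by linarith
  have hpow : (1 + a) ^ ((3 : ℝ) / 2) = √(1 + a) ^ 3 := by
    rw [rpow_div_two_eq_sqrt _ hb.le]
    exact_mod_cast rpow_natCast _ 3
  have hdiff := sqrt_add_add_sqrt_sub_le (ε := ε) hb (abs_le.2 ⟨by linarith, by linarith⟩)
  rw [hpow, neg_div, ← add_assoc, ← add_sub_assoc]
  linarith
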